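/- arXiv:1107.5232 — 2 statements merged into one kernel-verified Lean document; each statement's English description precedes it below -/
import Mathlib

section
/- Let W = (V, E) be a finite connected graph and let G be a group generated by elements {x_v : v ∈ V} subject to, for each v, the relation ∏_{(v,w) ∈ E, with multiplicity} x_w⁻¹ x_v = 1 (product over edges incident to v in some fixed order), together with x_r = 1 for a fixed root r ∈ V. If G admits a left-invariant strict total order and for a vertex v maximizing x_v there is an adjacent vertex w with x_w ≠ x_v in G, then we obtain a contradiction; hence all generators x_v are equal in G and thus G is trivial. -/
/-!
Take a vertex `v₀` at which `x` is maximal. Every factor `x_w⁻¹ x_{v₀}` of the relation at `v₀`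
is `≥ 1` by left-invariance, and a product of elements `≥ 1` equals `1` only if every factor
does; so all neighbours of `v₀` are maximal as well. By connectivity every `x_v` equals the
maximum, which is `x_r = 1`, and the group generated by the `x_v` is trivial.
-/

section LeftOrdered

variable {M : Type*}

lemma List.eq_one_of_prod_eq_one_of_one_le [Monoid M] [PartialOrder M] [MulLeftMono M]
    {L : List M} (h1 : ∀ g ∈ L, 1 ≤ g) (hprod : L.prod = 1) : ∀ g ∈ L, g = 1 := by
  induction L with
  | nil => simp
  | cons a L ih =>
    rw [List.prod_cons] at hprod
    have ha : 1 ≤ a := h1 a List.mem_cons_self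
    have hL : 1 ≤ L.prod := List.one_le_prod_of_one_le fun g hg => h1 g (List.mem_cons_of_mem a hg)
    have ha1 : a = 1 := le_antisymm (hprod ▸ le_mul_of_one_le_right' hL) ha
    rw [ha1, one_mul] at hprod
    rintro g (_ | ⟨_, hg⟩)
    · exact ha1
    · exact ih (fun g hg => h1 g (List.mem_cons_of_mem a hg)) hprod g hg

lemma List.eq_of_prod_inv_mul_eq_one_of_le {α : Type*} [Group M] [PartialOrder M] [MulLeftMono M]
    {l : List α} {f : α → M} {m : M} (hle : ∀ w ∈ l, f w ≤ m)
    (hprod : (l.map fun w => (f w)⁻¹ * m).prod = 1) : ∀ w ∈ l, f w = m := by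
  have hone := List.eq_one_of_prod_eq_one_of_one_le (by simpa [le_inv_mul_iff_le] using hle) hprod
  intro w hw
  exact inv_mul_eq_one.1 (hone _ (List.mem_map_of_mem hw))

end LeftOrdered

namespace SimpleGraph

variable {V : Type*} {W : SimpleGraph V}

lemma Reachable.mem_of_forall_adj {S : Set V} (hS : ∀ a b, a ∈ S → W.Adj a b → b ∈ S)
    {u v : V} (huv : W.Reachable u v) (hu : u ∈ S) : v ∈ S := by
  obtain ⟨p⟩ := huv
  induction p with
  | nil => exact hu
  | cons h _ ih => exact ih (hS _ _ hu h)

lemma Connected.eq_of_forall_adj {α : Type*} (hconn : W.Connected) {f : V → α} {v₀ : V}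
    (hf : ∀ a b, f a = f v₀ → W.Adj a b → f b = f v₀) (v : V) : f v = f v₀ :=
  (hconn v₀ v).mem_of_forall_adj (S := {a | f a = f v₀}) hf rfl

end SimpleGraph

theorem stmt_9_general {V : Type*} [Fintype V]
    (W : SimpleGraph V) [DecidableRel W.Adj] (hconn : W.Connected)
    {G : Type*} [Group G] [LinearOrder G]
    (hmul : ∀ a b c : G, a < b → c * a < c * b)
    (x : V → G) (r : V)
    (hgen : Subgroup.closure (Set.range x) = ⊤)
    (hroot : x r = 1)
    (l : V → List V)
    (hedges : ∀ v, (↑(l v) : Multiset V) = (W.neighborFinset v).val)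
    (hrel : ∀ v, ((l v).map (fun w => (x w)⁻¹ * x v)).prod = 1) :
    (∀ v w : V, x v = x w) ∧ ∀ g : G, g = 1 := by
  have : MulLeftStrictMono G := ⟨fun c _ _ h => hmul _ _ c h⟩
  have := mulLeftMono_of_mulLeftStrictMono G
  have : Nonempty V := hconn.nonempty
  obtain ⟨v₀, -, hmax⟩ := Finset.exists_max_image Finset.univ x Finset.univ_nonempty
  have hspread : ∀ u w, x u = x v₀ → W.Adj u w → x w = x v₀ := by
    intro u w hu hadj
    have hw : w ∈ l u := by
      rw [← Multiset.mem_coe, hedges u]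
      exact (W.mem_neighborFinset u w).2 hadj
    rw [← hu]
    exact List.eq_of_prod_inv_mul_eq_one_of_le (fun w _ => hu ▸ hmax w (Finset.mem_univ w))
      (hrel u) w hw
  have hx : ∀ v, x v = 1 := fun v => (hconn.eq_of_forall_adj hspread v).trans
    ((hconn.eq_of_forall_adj hspread r).symm.trans hroot)
  refine ⟨fun v w => (hx v).trans (hx w).symm, fun g => ?_⟩
  have htop : (⊤ : Subgroup G) = ⊥ :=
    hgen ▸ Subgroup.closure_eq_bot_iff.2 (Set.range_subset_iff.2 hx)
  exact Subgroup.mem_bot.1 (htop ▸ Subgroup.mem_top g)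

theorem stmt_9 {V : Type*} [Fintype V] [DecidableEq V]
    (W : SimpleGraph V) [DecidableRel W.Adj] (hconn : W.Connected)
    {G : Type*} [Group G] [LinearOrder G]
    (hmul : ∀ a b c : G, a < b → c * a < c * b)
    (x : V → G) (r : V)
    (hgen : Subgroup.closure (Set.range x) = ⊤)
    (hroot : x r = 1)
    (l : V → List V)
    (hedges : ∀ v, (↑(l v) : Multiset V) = (W.neighborFinset v).val)
    (hrel : ∀ v, ((l v).map (fun w => (x w)⁻¹ * x v)).prod = 1) :
    (∀ v w : V, x v = x w) ∧ ∀ g : G, g = 1 :=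
  stmt_9_general W hconn hmul x r hgen hroot l hedges hrel
end

section
/- Let G be a group with a left-invariant strict total order, let S be a nonempty finite set of elements of G, and let m ∈ S be a maximal element of S with respect to <. If g₁, …, g_k ∈ S and g_j < m for some j, then the product (g₁⁻¹ m)(g₂⁻¹ m)⋯(g_k⁻¹ m) is strictly greater than 1, and in particular is not equal to 1. -/
/-!
Left multiplication by `g⁻¹` turns `g ≤ m` into `1 ≤ g⁻¹ * m` (strictly when `g < m`), so every
factor of the product is at least `1` and one of them exceeds `1`. In a left-ordered monoid such a
product exceeds `1`: peel off the first factor and multiply on the left only.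
-/

namespace List

variable {M : Type*} [Monoid M] [Preorder M] [MulLeftMono M] [MulLeftStrictMono M]

theorem one_lt_prod_of_one_le_of_exists_one_lt {l : List M} (hle : ∀ x ∈ l, 1 ≤ x)
    (hlt : ∃ x ∈ l, 1 < x) : 1 < l.prod := by
  induction l with
  | nil => simp at hlt
  | cons a t ih =>
    rw [forall_mem_cons] at hle
    rw [prod_cons]
    obtain ⟨x, hx, hx1⟩ := hlt
    rcases mem_cons.mp hx with rfl | hxt
    · exact one_lt_mul_of_lt_of_le' hx1 (one_le_prod_of_one_le hle.2)
    · exact one_lt_mul_of_le_of_lt' hle.1 (ih hle.2 ⟨x, hxt, hx1⟩)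

end List

theorem stmt_10_general {G : Type*} [Group G] [LinearOrder G]
    (hmul : ∀ a b c : G, a < b → c * a < c * b)
    (S : Finset G) (m : G)
    (hmax : ∀ g ∈ S, g ≤ m)
    (l : List G) (hl : ∀ g ∈ l, g ∈ S) (hj : ∃ g ∈ l, g < m) :
    1 < (l.map (fun g => g⁻¹ * m)).prod ∧ (l.map (fun g => g⁻¹ * m)).prod ≠ 1 := by
  have : MulLeftStrictMono G := ⟨fun c _ _ h => hmul _ _ c h⟩
  have := mulLeftMono_of_mulLeftStrictMono G
  have hpos : 1 < (l.map (fun g => g⁻¹ * m)).prod := by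
    apply List.one_lt_prod_of_one_le_of_exists_one_lt
    · simp only [List.forall_mem_map]
      exact fun g hg => le_inv_mul_iff_le.mpr (hmax g (hl g hg))
    · obtain ⟨g, hg, hgm⟩ := hj
      exact ⟨g⁻¹ * m, List.mem_map_of_mem hg, lt_inv_mul_iff_lt.mpr hgm⟩
  exact ⟨hpos, hpos.ne'⟩

theorem stmt_10 {G : Type*} [Group G] [LinearOrder G]
    (hmul : ∀ a b c : G, a < b → c * a < c * b)
    (S : Finset G) (hS : S.Nonempty) (m : G) (hm : m ∈ S)
    (hmax : ∀ g ∈ S, g ≤ m)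
    (l : List G) (hl : ∀ g ∈ l, g ∈ S) (hj : ∃ g ∈ l, g < m) :
    1 < (l.map (fun g => g⁻¹ * m)).prod ∧ (l.map (fun g => g⁻¹ * m)).prod ≠ 1 :=
  stmt_10_general hmul S m hmax l hl hj
end
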